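/- The group G = ⟨c∘, y, t ∣ [y, c∘²] = 1, t⁻¹c∘²t = c∘⁸⟩ is commensurable with BS(4,16): G contains a subgroup of index 2 isomorphic to a subgroup of index 4 in BS(4,16). -/

import Mathlib

open FreeGroup

/-- The Baumslag–Solitar group `BS(n,m) = ⟨c, d ∣ d⁻¹cⁿd = cᵐ⟩` (generator 0 is `c`,
generator 1 is `d`). -/
abbrev BS (n m : ℕ) : Type :=
  PresentedGroup ({(of 1)⁻¹ * (of 0) ^ n * of 1 * ((of 0) ^ m)⁻¹} : Set (FreeGroup (Fin 2)))

/-- The group `G = ⟨c∘, y, t ∣ [y, c∘²] = 1, t⁻¹c∘²t = c∘⁸⟩` (generators: 0 = c∘, 1 = y,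
2 = t; the commutator `[a,b]` is `a⁻¹b⁻¹ab`). -/
abbrev Gcyt : Type :=
  PresentedGroup ({(of 1)⁻¹ * ((of 0) ^ 2)⁻¹ * of 1 * (of 0) ^ 2,
                   (of 2)⁻¹ * (of 0) ^ 2 * of 2 * ((of 0) ^ 8)⁻¹} : Set (FreeGroup (Fin 3)))

namespace Stmt8
def c : Gcyt := .of 0
def y : Gcyt := .of 1
def t : Gcyt := .of 2
def a : BS 4 16 := .of 0
def b : BS 4 16 := .of 1

lemma relG1 : y⁻¹ * (c^2)⁻¹ * y * c^2 = 1 := by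
  have hm : ((of 1)⁻¹ * ((of 0) ^ 2)⁻¹ * of 1 * (of 0) ^ 2 : FreeGroup (Fin 3)) ∈
      Subgroup.normalClosure ({(of 1)⁻¹ * ((of 0) ^ 2)⁻¹ * of 1 * (of 0) ^ 2,
                   (of 2)⁻¹ * (of 0) ^ 2 * of 2 * ((of 0) ^ 8)⁻¹} : Set (FreeGroup (Fin 3))) :=
    Subgroup.subset_normalClosure (by simp)
  have h := PresentedGroup.mk_eq_one_iff.2 hm
  simpa [c, y, PresentedGroup.of, _root_.map_mul, _root_.map_inv, map_pow] using h

lemma relG2 : t⁻¹ * c^2 * t * (c^8)⁻¹ = 1 := by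
  have hm : ((of 2)⁻¹ * (of 0) ^ 2 * of 2 * ((of 0) ^ 8)⁻¹ : FreeGroup (Fin 3)) ∈
      Subgroup.normalClosure ({(of 1)⁻¹ * ((of 0) ^ 2)⁻¹ * of 1 * (of 0) ^ 2,
                   (of 2)⁻¹ * (of 0) ^ 2 * of 2 * ((of 0) ^ 8)⁻¹} : Set (FreeGroup (Fin 3))) :=
    Subgroup.subset_normalClosure (by simp)
  have h := PresentedGroup.mk_eq_one_iff.2 hm
  simpa [c, t, PresentedGroup.of, _root_.map_mul, _root_.map_inv, map_pow] using h

lemma relB : b⁻¹ * a^4 * b * (a^16)⁻¹ = 1 := by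
  have hm : ((of 1)⁻¹ * (of 0) ^ 4 * of 1 * ((of 0) ^ 16)⁻¹ : FreeGroup (Fin 2)) ∈
      Subgroup.normalClosure ({(of 1)⁻¹ * (of 0) ^ 4 * of 1 * ((of 0) ^ 16)⁻¹} : Set (FreeGroup (Fin 2))) :=
    Subgroup.subset_normalClosure (by simp)
  have h := PresentedGroup.mk_eq_one_iff.2 hm
  simpa [a, b, PresentedGroup.of, _root_.map_mul, _root_.map_inv, map_pow] using h

lemma hyc : y * c^2 = c^2 * y := by
  have h := relG1
  rw [show y⁻¹ * (c^2)⁻¹ * y * c^2 = y⁻¹ * ((c^2)⁻¹ * (y * c^2)) by group] at h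
  have h2 : (c^2)⁻¹ * (y * c^2) = y := (inv_mul_eq_one.mp h).symm
  have h3 : c^2*((c^2)⁻¹*(y*c^2)) = c^2*y := by rw [h2]
  rw [show c^2*((c^2)⁻¹*(y*c^2)) = y*c^2 by group] at h3
  exact h3

lemma htc : t⁻¹ * c^2 * t = c^8 := by
  have h := relG2
  exact mul_inv_eq_one.mp h

lemma hab : b⁻¹ * a^4 * b = a^16 := mul_inv_eq_one.mp relB

lemma hab' : b * a^16 = a^4 * b := by rw [← hab]; group

lemma hab'' : b⁻¹ * a^4 = a^16 * b⁻¹ := by rw [← hab]; group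

lemma g1G : (y⁻¹*t)⁻¹ * c^2 * (y⁻¹*t) = c^8 := by
  rw [show (y⁻¹*t)⁻¹ * c^2 * (y⁻¹*t) = t⁻¹ * ((y * c^2) * y⁻¹) * t by group, hyc,
      show t⁻¹ * (c^2 * y * y⁻¹) * t = t⁻¹ * c^2 * t by group, htc]

lemma g2G : (c*t*c⁻¹)⁻¹ * c^2 * (c*t*c⁻¹) = c^8 := by
  rw [show (c*t*c⁻¹)⁻¹ * c^2 * (c*t*c⁻¹) = c * (t⁻¹ * c^2 * t) * c⁻¹ by group, htc]; group

lemma g3G : (c*y⁻¹*t*c⁻¹)⁻¹ * c^2 * (c*y⁻¹*t*c⁻¹) = c^8 := by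
  rw [show (c*y⁻¹*t*c⁻¹)⁻¹ * c^2 * (c*y⁻¹*t*c⁻¹) = c * ((y⁻¹*t)⁻¹ * c^2 * (y⁻¹*t)) * c⁻¹ by group, g1G]
  group

-- ε₂
def e2 : Gcyt →* Multiplicative (ZMod 2) :=
  PresentedGroup.toGroup (f := ![Multiplicative.ofAdd 1, 1, 1]) (by
    rintro r (rfl | rfl) <;>
      simp [_root_.map_mul, _root_.map_inv, map_pow] <;> decide)

@[simp] lemma e2_c : e2 c = Multiplicative.ofAdd 1 := PresentedGroup.toGroup.of _
@[simp] lemma e2_y : e2 y = 1 := PresentedGroup.toGroup.of _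
@[simp] lemma e2_t : e2 t = 1 := PresentedGroup.toGroup.of _

-- φ : Gcyt →* BS 4 16
lemma commB : (b*a*b⁻¹*a⁻¹) * a^4 = a^4 * (b*a*b⁻¹*a⁻¹) := by
  rw [show (b*a*b⁻¹*a⁻¹) * a^4 = b*a*(b⁻¹*a^4)*a⁻¹ by group, hab'',
      show b*a*(a^16*b⁻¹)*a⁻¹ = (b*a^16)*(a*b⁻¹*a⁻¹) by group, hab']
  group

def phi : Gcyt →* BS 4 16 :=
  PresentedGroup.toGroup (f := ![a^2, b*a*b⁻¹*a⁻¹, b]) (by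
    rintro r (rfl | rfl)
    · simp only [_root_.map_mul, _root_.map_inv, map_pow, FreeGroup.lift_apply_of, Matrix.cons_val_zero,
        Matrix.cons_val_one, Matrix.head_cons]
      rw [show ((b*a*b⁻¹*a⁻¹)⁻¹ * ((a^2)^2)⁻¹ * (b*a*b⁻¹*a⁻¹) * (a^2)^2 : BS 4 16)
          = (b*a*b⁻¹*a⁻¹)⁻¹ * (a^4)⁻¹ * ((b*a*b⁻¹*a⁻¹) * a^4) by group, commB]
      group
    · simp only [_root_.map_mul, _root_.map_inv, map_pow, FreeGroup.lift_apply_of, Matrix.cons_val_zero,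
        Matrix.cons_val_one, Matrix.head_cons, Matrix.cons_val_two, Matrix.tail_cons]
      rw [show (b⁻¹ * (a^2)^2 * b * (((a^2)^8)⁻¹) : BS 4 16) = b⁻¹ * a^4 * b * (a^16)⁻¹ by group]
      exact relB)

@[simp] lemma phi_c : phi c = a^2 := PresentedGroup.toGroup.of _
@[simp] lemma phi_y : phi y = b*a*b⁻¹*a⁻¹ := PresentedGroup.toGroup.of _
@[simp] lemma phi_t : phi t = b := PresentedGroup.toGroup.of _


-- the wreath product W = (ZMod 4 → Gcyt) ⋊ Multiplicative (ZMod 4)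
abbrev P := ZMod 4 → Gcyt

def shiftAut (k : ZMod 4) : MulAut P where
  toFun f := fun i => f (i + k)
  invFun f := fun i => f (i - k)
  left_inv f := by funext i; simp
  right_inv f := by funext i; simp
  map_mul' f g := rfl

def shift : Multiplicative (ZMod 4) →* MulAut P where
  toFun k := shiftAut k.toAdd
  map_one' := by ext f i; simp [shiftAut]
  map_mul' k l := by
    ext f i
    simp only [shiftAut, MulAut.mul_apply, MulEquiv.coe_mk, Equiv.coe_fn_mk]
    rw [toAdd_mul, add_assoc, add_comm k.toAdd l.toAdd]

@[simp] lemma shift_apply (k : Multiplicative (ZMod 4)) (f : P) (i : ZMod 4) :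
    shift k f i = f (i + k.toAdd) := rfl

abbrev W := SemidirectProduct P (Multiplicative (ZMod 4)) shift

def Xa : W := ⟨fun i => if i = 3 then c^2 else 1, Multiplicative.ofAdd 1⟩
def Xb : W := ⟨fun i => if i = 0 then t else if i = 1 then y⁻¹ * t
    else if i = 2 then c * t * c⁻¹ else c * y⁻¹ * t * c⁻¹, 1⟩

lemma zmod4_cases : ∀ i : ZMod 4, i = 0 ∨ i = 1 ∨ i = 2 ∨ i = 3 := by decide

lemma Xa_pow4 : Xa^4 = ⟨fun _ => c^2, 1⟩ := by
  have : Xa^4 = Xa*Xa*Xa*Xa := by norm_num [pow_succ, mul_assoc]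
  rw [this]
  ext i
  · simp only [SemidirectProduct.mul_left, shift_apply, Pi.mul_apply, Xa, toAdd_ofAdd, toAdd_mul]
    rcases zmod4_cases i with rfl | rfl | rfl | rfl <;>
      simp (config := { decide := true })
  · simp [Xa]; decide

lemma Xa_pow16 : Xa^16 = ⟨fun _ => c^8, 1⟩ := by
  rw [show (16:ℕ) = 4*4 from rfl, pow_mul, Xa_pow4]
  have h4 : (⟨fun _ => c^2, 1⟩ : W)^4 = ⟨fun _ => c^2, 1⟩*⟨fun _ => c^2, 1⟩*⟨fun _ => c^2, 1⟩*⟨fun _ => c^2, 1⟩ := by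
    norm_num [pow_succ, mul_assoc]
  rw [h4]
  ext i
  · simp only [SemidirectProduct.mul_left, shift_apply, Pi.mul_apply]
    group
  · simp

lemma conjW : Xb⁻¹ * (⟨fun _ => c^2, 1⟩ : W) * Xb = ⟨fun _ => c^8, 1⟩ := by
  ext i
  · simp only [SemidirectProduct.mul_left, SemidirectProduct.inv_left,
      SemidirectProduct.mul_right, SemidirectProduct.inv_right, shift_apply, Pi.mul_apply,
      Pi.inv_apply, Xb, inv_one, toAdd_one, add_zero, map_one, MulAut.one_apply]
    rcases zmod4_cases i with rfl | rfl | rfl | rfl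
    · simp (config := { decide := true })
      exact htc
    · simp (config := { decide := true })
      rw [show t⁻¹ * y * c^2 * (y⁻¹*t) = (y⁻¹*t)⁻¹ * c^2 * (y⁻¹*t) by group, g1G]
    · simp (config := { decide := true })
      rw [show c * (t⁻¹ * c⁻¹) * c^2 * (c*t*c⁻¹) = (c*t*c⁻¹)⁻¹ * c^2 * (c*t*c⁻¹) by group, g2G]
    · simp (config := { decide := true })
      rw [show c * (t⁻¹ * (y * c⁻¹)) * c^2 * (c*y⁻¹*t*c⁻¹) = (c*y⁻¹*t*c⁻¹)⁻¹ * c^2 * (c*y⁻¹*t*c⁻¹) by group, g3G]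
  · simp [Xb]

lemma relW : Xb⁻¹ * Xa^4 * Xb * (Xa^16)⁻¹ = 1 := by
  rw [Xa_pow4, Xa_pow16, show Xb⁻¹ * (⟨fun _ => c^2, 1⟩ : W) * Xb * (⟨fun _ => c^8, 1⟩ : W)⁻¹
      = (Xb⁻¹ * ⟨fun _ => c^2, 1⟩ * Xb) * (⟨fun _ => c^8, 1⟩ : W)⁻¹ by group, conjW]
  group

def X : BS 4 16 →* W :=
  PresentedGroup.toGroup (f := ![Xa, Xb]) (by
    rintro r rfl
    simp only [_root_.map_mul, _root_.map_inv, map_pow, FreeGroup.lift_apply_of, Matrix.cons_val_zero,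
      Matrix.cons_val_one, Matrix.head_cons]
    exact relW)

@[simp] lemma X_a : X a = Xa := PresentedGroup.toGroup.of _
@[simp] lemma X_b : X b = Xb := PresentedGroup.toGroup.of _

def e4 : BS 4 16 →* Multiplicative (ZMod 4) := SemidirectProduct.rightHom.comp X

@[simp] lemma e4_a : e4 a = Multiplicative.ofAdd 1 := by simp [e4, Xa]
@[simp] lemma e4_b : e4 b = 1 := by simp [e4, Xb]

-- generating sets for the subgroups
def SA : Set Gcyt := {c^2, y, c*y*c⁻¹, t, c*t*c⁻¹}
def HA : Subgroup Gcyt := Subgroup.closure SA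

lemma mA1 : c^2 ∈ HA := Subgroup.subset_closure (by simp [SA])
lemma mA2 : y ∈ HA := Subgroup.subset_closure (by simp [SA])
lemma mA3 : c*y*c⁻¹ ∈ HA := Subgroup.subset_closure (by simp [SA])
lemma mA4 : t ∈ HA := Subgroup.subset_closure (by simp [SA])
lemma mA5 : c*t*c⁻¹ ∈ HA := Subgroup.subset_closure (by simp [SA])

lemma cyc : c⁻¹ * y * c = c * y * c⁻¹ := by
  rw [show c⁻¹ * y * c = c⁻¹ * (y * c^2) * c⁻¹ by group, hyc]; group

lemma conjA : ∀ h ∈ HA, c * h * c⁻¹ ∈ HA ∧ c⁻¹ * h * c ∈ HA := by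
  intro h hh
  induction hh using Subgroup.closure_induction with
  | mem x hx =>
    rcases hx with rfl | rfl | rfl | rfl | rfl
    · constructor
      · rw [show c*(c^2)*c⁻¹ = c^2 by group]; exact mA1
      · rw [show c⁻¹*(c^2)*c = c^2 by group]; exact mA1
    · exact ⟨mA3, by rw [cyc]; exact mA3⟩
    · constructor
      · rw [show c*(c*y*c⁻¹)*c⁻¹ = c^2 * y * (c^2)⁻¹ by simp only [pow_two]; group]
        exact mul_mem (mul_mem mA1 mA2) (inv_mem mA1)
      · rw [show c⁻¹*(c*y*c⁻¹)*c = y by group]; exact mA2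
    · constructor
      · exact mA5
      · rw [show c⁻¹*t*c = (c^2)⁻¹ * (c*t*c⁻¹) * c^2 by group]
        exact mul_mem (mul_mem (inv_mem mA1) mA5) mA1
    · constructor
      · rw [show c*(c*t*c⁻¹)*c⁻¹ = c^2 * t * (c^2)⁻¹ by simp only [pow_two]; group]
        exact mul_mem (mul_mem mA1 mA4) (inv_mem mA1)
      · rw [show c⁻¹*(c*t*c⁻¹)*c = t by group]; exact mA4
  | one => exact ⟨by simpa using one_mem HA, by simpa using one_mem HA⟩
  | mul u v hu hv ihu ihv =>
    constructor
    · rw [show c*(u*v)*c⁻¹ = (c*u*c⁻¹)*(c*v*c⁻¹) by group]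
      exact mul_mem ihu.1 ihv.1
    · rw [show c⁻¹*(u*v)*c = (c⁻¹*u*c)*(c⁻¹*v*c) by group]
      exact mul_mem ihu.2 ihv.2
  | inv u hu ihu =>
    constructor
    · rw [show c*u⁻¹*c⁻¹ = (c*u*c⁻¹)⁻¹ by group]; exact inv_mem ihu.1
    · rw [show c⁻¹*u⁻¹*c = (c⁻¹*u*c)⁻¹ by group]; exact inv_mem ihu.2

lemma zconjA : ∀ (n : ℤ), ∀ h ∈ HA, c^n * h * c^(-n) ∈ HA := by
  intro n
  induction n using Int.induction_on with
  | zero => intro h hh; simpa using hh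
  | succ k ih =>
    intro h hh
    rw [show c^((k:ℤ)+1) * h * c^(-((k:ℤ)+1)) = c * (c^(k:ℤ) * h * c^(-(k:ℤ))) * c⁻¹ by group]
    exact (conjA _ (ih h hh)).1
  | pred k ih =>
    intro h hh
    rw [show c^(-(k:ℤ)-1) * h * c^(-(-(k:ℤ)-1)) = c⁻¹ * (c^(-(k:ℤ)) * h * c^(-(-(k:ℤ)))) * c by group]
    exact (conjA _ (ih h hh)).2

lemma covA : ∀ g : Gcyt, ∃ n : ℤ, g * c^n ∈ HA := by
  intro g
  have hg : g ∈ Subgroup.closure (Set.range (PresentedGroup.of)) := by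
    rw [PresentedGroup.closure_range_of]; trivial
  induction hg using Subgroup.closure_induction with
  | mem x hx =>
    obtain ⟨i, rfl⟩ := hx
    have hi := (by decide : ∀ j : Fin 3, j = 0 ∨ j = 1 ∨ j = 2) i
    rcases hi with rfl | rfl | rfl
    · refine ⟨-1, ?_⟩
      rw [show (PresentedGroup.of 0 : Gcyt) * c^(-1:ℤ) = c * c^(-1:ℤ) from rfl,
        show c * c^(-1:ℤ) = 1 by group]
      exact one_mem _
    · exact ⟨0, by simpa [y] using mA2⟩
    · exact ⟨0, by simpa [t] using mA4⟩
  | one => exact ⟨0, by simpa using one_mem HA⟩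
  | mul u v hu hv ihu ihv =>
    obtain ⟨m, hm⟩ := ihu
    obtain ⟨n, hn⟩ := ihv
    refine ⟨n + m, ?_⟩
    rw [show u*v*c^(n+m) = (u*c^m) * (c^(-m) * (v*c^n) * c^(-(-m))) by group]
    exact mul_mem hm (zconjA (-m) _ hn)
  | inv u hu ihu =>
    obtain ⟨n, hn⟩ := ihu
    refine ⟨-n, ?_⟩
    rw [show u⁻¹*c^(-n) = c^n * ((u*c^n)⁻¹) * c^(-n) by group]
    exact zconjA n _ (inv_mem hn)

lemma HA_le_ker : HA ≤ e2.ker := by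
  rw [HA, Subgroup.closure_le]
  rintro x (rfl | rfl | rfl | rfl | rfl) <;>
    simp only [SetLike.mem_coe, MonoidHom.mem_ker, map_pow, _root_.map_mul, _root_.map_inv,
      e2_c, e2_y, e2_t] <;> decide

lemma HA_eq : e2.ker = HA := by
  refine le_antisymm ?_ HA_le_ker
  intro g hg
  obtain ⟨n, hn⟩ := covA g
  have h2 : e2 (g * c^n) = 1 := HA_le_ker hn
  rw [_root_.map_mul, MonoidHom.mem_ker.mp hg, one_mul, map_zpow, e2_c] at h2
  have h3 : (n : ZMod 2) = 0 := by
    have := congrArg Multiplicative.toAdd h2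
    simpa [toAdd_zpow] using this
  obtain ⟨k, rfl⟩ := (ZMod.intCast_zmod_eq_zero_iff_dvd n 2).mp h3
  have hc : c^((2:ℤ)*k) ∈ HA := by
    rw [zpow_mul]
    exact zpow_mem (by simpa using mA1) k
  have := mul_mem hn (inv_mem hc)
  simpa using this

-- B side
def SB : Set (BS 4 16) := {a^4, b, a*b*a⁻¹, a^2*b*(a^2)⁻¹, a^3*b*(a^3)⁻¹}
def HB : Subgroup (BS 4 16) := Subgroup.closure SB

lemma mB1 : a^4 ∈ HB := Subgroup.subset_closure (by simp [SB])
lemma mB2 : b ∈ HB := Subgroup.subset_closure (by simp [SB])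
lemma mB3 : a*b*a⁻¹ ∈ HB := Subgroup.subset_closure (by simp [SB])
lemma mB4 : a^2*b*(a^2)⁻¹ ∈ HB := Subgroup.subset_closure (by simp [SB])
lemma mB5 : a^3*b*(a^3)⁻¹ ∈ HB := Subgroup.subset_closure (by simp [SB])

lemma conjB : ∀ h ∈ HB, a * h * a⁻¹ ∈ HB ∧ a⁻¹ * h * a ∈ HB := by
  intro h hh
  induction hh using Subgroup.closure_induction with
  | mem x hx =>
    rcases hx with rfl | rfl | rfl | rfl | rfl
    · constructor
      · rw [show a*(a^4)*a⁻¹ = a^4 by group]; exact mB1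
      · rw [show a⁻¹*(a^4)*a = a^4 by group]; exact mB1
    · constructor
      · exact mB3
      · rw [show a⁻¹*b*a = (a^4)⁻¹ * (a^3*b*(a^3)⁻¹) * a^4 by group]
        exact mul_mem (mul_mem (inv_mem mB1) mB5) mB1
    · constructor
      · rw [show a*(a*b*a⁻¹)*a⁻¹ = a^2*b*(a^2)⁻¹ by simp only [pow_two]; group]
        exact mB4
      · rw [show a⁻¹*(a*b*a⁻¹)*a = b by group]; exact mB2
    · constructor
      · rw [show a*(a^2*b*(a^2)⁻¹)*a⁻¹ = a^3*b*(a^3)⁻¹ by group]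
        exact mB5
      · rw [show a⁻¹*(a^2*b*(a^2)⁻¹)*a = a*b*a⁻¹ by group]; exact mB3
    · constructor
      · rw [show a*(a^3*b*(a^3)⁻¹)*a⁻¹ = a^4*b*(a^4)⁻¹ by group]
        exact mul_mem (mul_mem mB1 mB2) (inv_mem mB1)
      · rw [show a⁻¹*(a^3*b*(a^3)⁻¹)*a = a^2*b*(a^2)⁻¹ by group]; exact mB4
  | one => exact ⟨by simpa using one_mem HB, by simpa using one_mem HB⟩
  | mul u v hu hv ihu ihv =>
    constructor
    · rw [show a*(u*v)*a⁻¹ = (a*u*a⁻¹)*(a*v*a⁻¹) by group]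
      exact mul_mem ihu.1 ihv.1
    · rw [show a⁻¹*(u*v)*a = (a⁻¹*u*a)*(a⁻¹*v*a) by group]
      exact mul_mem ihu.2 ihv.2
  | inv u hu ihu =>
    constructor
    · rw [show a*u⁻¹*a⁻¹ = (a*u*a⁻¹)⁻¹ by group]; exact inv_mem ihu.1
    · rw [show a⁻¹*u⁻¹*a = (a⁻¹*u*a)⁻¹ by group]; exact inv_mem ihu.2

lemma zconjB : ∀ (n : ℤ), ∀ h ∈ HB, a^n * h * a^(-n) ∈ HB := by
  intro n
  induction n using Int.induction_on with
  | zero => intro h hh; simpa using hh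
  | succ k ih =>
    intro h hh
    rw [show a^((k:ℤ)+1) * h * a^(-((k:ℤ)+1)) = a * (a^(k:ℤ) * h * a^(-(k:ℤ))) * a⁻¹ by group]
    exact (conjB _ (ih h hh)).1
  | pred k ih =>
    intro h hh
    rw [show a^(-(k:ℤ)-1) * h * a^(-(-(k:ℤ)-1)) = a⁻¹ * (a^(-(k:ℤ)) * h * a^(-(-(k:ℤ)))) * a by group]
    exact (conjB _ (ih h hh)).2

lemma covB : ∀ g : BS 4 16, ∃ n : ℤ, g * a^n ∈ HB := by
  intro g
  have hg : g ∈ Subgroup.closure (Set.range (PresentedGroup.of)) := by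
    rw [PresentedGroup.closure_range_of]; trivial
  induction hg using Subgroup.closure_induction with
  | mem x hx =>
    obtain ⟨i, rfl⟩ := hx
    have hi := (by decide : ∀ j : Fin 2, j = 0 ∨ j = 1) i
    rcases hi with rfl | rfl
    · refine ⟨-1, ?_⟩
      rw [show (PresentedGroup.of 0 : BS 4 16) * a^(-1:ℤ) = a * a^(-1:ℤ) from rfl,
        show a * a^(-1:ℤ) = 1 by group]
      exact one_mem _
    · exact ⟨0, by simpa [b] using mB2⟩
  | one => exact ⟨0, by simpa using one_mem HB⟩
  | mul u v hu hv ihu ihv =>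
    obtain ⟨m, hm⟩ := ihu
    obtain ⟨n, hn⟩ := ihv
    refine ⟨n + m, ?_⟩
    rw [show u*v*a^(n+m) = (u*a^m) * (a^(-m) * (v*a^n) * a^(-(-m))) by group]
    exact mul_mem hm (zconjB (-m) _ hn)
  | inv u hu ihu =>
    obtain ⟨n, hn⟩ := ihu
    refine ⟨-n, ?_⟩
    rw [show u⁻¹*a^(-n) = a^n * ((u*a^n)⁻¹) * a^(-n) by group]
    exact zconjB n _ (inv_mem hn)

lemma HB_le_ker : HB ≤ e4.ker := by
  rw [HB, Subgroup.closure_le]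
  rintro x (rfl | rfl | rfl | rfl | rfl) <;>
    simp only [SetLike.mem_coe, MonoidHom.mem_ker, map_pow, _root_.map_mul, _root_.map_inv,
      e4_a, e4_b] <;> decide

lemma HB_eq : e4.ker = HB := by
  refine le_antisymm ?_ HB_le_ker
  intro g hg
  obtain ⟨n, hn⟩ := covB g
  have h2 : e4 (g * a^n) = 1 := HB_le_ker hn
  rw [_root_.map_mul, MonoidHom.mem_ker.mp hg, one_mul, map_zpow, e4_a] at h2
  have h3 : (n : ZMod 4) = 0 := by
    have := congrArg Multiplicative.toAdd h2
    simpa [toAdd_zpow] using this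
  obtain ⟨k, rfl⟩ := (ZMod.intCast_zmod_eq_zero_iff_dvd n 4).mp h3
  have hc : a^((4:ℤ)*k) ∈ HB := by
    rw [zpow_mul]
    exact zpow_mem (by simpa using mB1) k
  have := mul_mem hn (inv_mem hc)
  simpa using this

-- index computations
lemma idxA : e2.ker.index = 2 := by
  have hs : Function.Surjective e2 := by
    intro z
    rcases (by decide : ∀ w : Multiplicative (ZMod 2), w = 1 ∨ w = Multiplicative.ofAdd 1) z
      with rfl | rfl
    exacts [⟨1, map_one _⟩, ⟨c, e2_c⟩]
  rw [Subgroup.index_ker, MonoidHom.range_eq_top.2 hs, Subgroup.card_top,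
    Nat.card_eq_fintype_card]
  rfl

lemma idxB : e4.ker.index = 4 := by
  have hs : Function.Surjective e4 := by
    intro z
    rcases (by decide : ∀ w : Multiplicative (ZMod 4), w = 1 ∨ w = Multiplicative.ofAdd 1 ∨
        w = Multiplicative.ofAdd 2 ∨ w = Multiplicative.ofAdd 3) z with rfl | rfl | rfl | rfl
    · exact ⟨1, map_one _⟩
    · exact ⟨a, e4_a⟩
    · exact ⟨a^2, by rw [map_pow, e4_a]; decide⟩
    · exact ⟨a^3, by rw [map_pow, e4_a]; decide⟩
  rw [Subgroup.index_ker, MonoidHom.range_eq_top.2 hs, Subgroup.card_top,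
    Nat.card_eq_fintype_card]
  rfl

-- applied evaluation lemmas for X on generators
lemma Xa_sq : Xa^2 = ⟨fun i => if i = 2 then c^2 else if i = 3 then c^2 else 1,
    Multiplicative.ofAdd 2⟩ := by
  rw [pow_two]
  ext i
  · simp only [SemidirectProduct.mul_left, shift_apply, Pi.mul_apply, Xa, toAdd_ofAdd]
    rcases zmod4_cases i with rfl | rfl | rfl | rfl <;>
      simp (config := { decide := true })
  · simp [Xa]; decide

@[simp] lemma shift_inv_apply (r : Multiplicative (ZMod 4)) (f : P) (i : ZMod 4) :
    ((shift r)⁻¹ : MulAut P) f i = f (i - r.toAdd) := rfl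
@[simp] lemma XaL (i : ZMod 4) : Xa.left i = if i = 3 then c^2 else 1 := rfl
@[simp] lemma XaR : Xa.right = Multiplicative.ofAdd 1 := rfl
@[simp] lemma XbL (i : ZMod 4) : Xb.left i = if i = 0 then t else if i = 1 then y⁻¹ * t
    else if i = 2 then c * t * c⁻¹ else c * y⁻¹ * t * c⁻¹ := rfl
@[simp] lemma XbR : Xb.right = 1 := rfl
@[simp] lemma Xa2L (i : ZMod 4) :
    (Xa^2).left i = if i = 2 then c^2 else if i = 3 then c^2 else 1 := by rw [Xa_sq]
@[simp] lemma Xa2R : (Xa^2).right = Multiplicative.ofAdd 2 := by rw [Xa_sq]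
@[simp] lemma Xa4L (i : ZMod 4) : (Xa^4).left i = c^2 := by rw [Xa_pow4]
@[simp] lemma Xa4R : (Xa^4).right = 1 := by rw [Xa_pow4]

-- evaluation lemmas for generators of HB
lemma XV1 : (X (a^4)).left 0 = c^2 ∧ (X (a^4)).right = 1 := by
  rw [map_pow, X_a]; exact ⟨Xa4L 0, Xa4R⟩

lemma XV2 : (X b).left 0 = t ∧ (X b).right = 1 := by
  rw [X_b]
  refine ⟨?_, XbR⟩
  rw [XbL]
  simp (config := { decide := true })

lemma XV3 : (X (a*b*a⁻¹)).left 0 = y⁻¹*t ∧ (X (a*b*a⁻¹)).right = 1 := by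
  refine ⟨?_, ?_⟩ <;>
    simp (config := { decide := true }) only [_root_.map_mul, _root_.map_inv,
      SemidirectProduct.mul_left, SemidirectProduct.mul_right, SemidirectProduct.inv_left,
      SemidirectProduct.inv_right, shift_apply, Pi.mul_apply, Pi.inv_apply,
      X_a, X_b, MulAut.mul_apply, toAdd_ofAdd, toAdd_mul, toAdd_inv, toAdd_one, shift_inv_apply, XaL, XaR, XbL, XbR] <;>
    simp (config := { decide := true }) <;> try group

lemma XV4 : (X (a^2*b*(a^2)⁻¹)).left 0 = c*t*c⁻¹ ∧ (X (a^2*b*(a^2)⁻¹)).right = 1 := by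
  refine ⟨?_, ?_⟩ <;>
    simp (config := { decide := true }) only [_root_.map_mul, _root_.map_inv, map_pow,
      SemidirectProduct.mul_left, SemidirectProduct.mul_right, SemidirectProduct.inv_left,
      SemidirectProduct.inv_right, shift_apply, Pi.mul_apply, Pi.inv_apply,
      X_a, X_b, MulAut.mul_apply, toAdd_ofAdd, toAdd_mul, toAdd_inv, toAdd_one, shift_inv_apply, Xa2L, Xa2R, XbL, XbR] <;>
    simp (config := { decide := true }) <;> try group

lemma XV5 : (X (a^3*b*(a^3)⁻¹)).left 0 = c*y⁻¹*t*c⁻¹ ∧ (X (a^3*b*(a^3)⁻¹)).right = 1 := by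
  have h3 : (a^3 : BS 4 16) = a^2*a := by rw [pow_succ]
  rw [h3]
  refine ⟨?_, ?_⟩ <;>
    simp (config := { decide := true }) only [_root_.map_mul, _root_.map_inv, map_pow,
      SemidirectProduct.mul_left, SemidirectProduct.mul_right, SemidirectProduct.inv_left,
      SemidirectProduct.inv_right, shift_apply, Pi.mul_apply, Pi.inv_apply,
      X_a, X_b, MulAut.mul_apply, toAdd_ofAdd, toAdd_mul, toAdd_inv, toAdd_one, XaL, XaR, shift_inv_apply, Xa2L, Xa2R, XbL, XbR] <;>
    simp (config := { decide := true }) <;> try group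
  all_goals rw [← MulAut.inv_def, shift_inv_apply]; simp (config := { decide := true })

-- membership of the images in HA
lemma mAyt : y⁻¹*t ∈ HA := mul_mem (inv_mem mA2) mA4
lemma mAcyt : c*y⁻¹*t*c⁻¹ ∈ HA := by
  rw [show c*y⁻¹*t*c⁻¹ = (c*y*c⁻¹)⁻¹*(c*t*c⁻¹) by group]
  exact mul_mem (inv_mem mA3) mA5

-- R lemma
lemma Rlem : ∀ bb ∈ HB, (X bb).left 0 ∈ HA ∧ phi ((X bb).left 0) = bb := by
  intro bb hbb
  induction hbb using Subgroup.closure_induction with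
  | mem x hx =>
    rcases hx with rfl | rfl | rfl | rfl | rfl
    · rw [XV1.1]
      refine ⟨mA1, ?_⟩
      rw [map_pow, phi_c, ← pow_mul]
    · rw [XV2.1]
      exact ⟨mA4, phi_t⟩
    · rw [XV3.1]
      refine ⟨mAyt, ?_⟩
      simp only [_root_.map_mul, _root_.map_inv, phi_y, phi_t]
      group
    · rw [XV4.1]
      refine ⟨mA5, ?_⟩
      simp only [_root_.map_mul, _root_.map_inv, map_pow, phi_c, phi_t]
    · rw [XV5.1]
      refine ⟨mAcyt, ?_⟩
      simp only [_root_.map_mul, _root_.map_inv, map_pow, phi_c, phi_y, phi_t]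
      group
  | one => exact ⟨by simpa using one_mem HA, by simp⟩
  | mul u v hu hv ihu ihv =>
    have hru : (X u).right = 1 := MonoidHom.mem_ker.mp (HB_le_ker hu)
    have hl : (X (u*v)).left 0 = (X u).left 0 * (X v).left 0 := by
      rw [_root_.map_mul, SemidirectProduct.mul_left, hru]
      simp
    rw [hl]
    exact ⟨mul_mem ihu.1 ihv.1, by rw [_root_.map_mul, ihu.2, ihv.2]⟩
  | inv u hu ihu =>
    have hru : (X u).right = 1 := MonoidHom.mem_ker.mp (HB_le_ker hu)
    have hl : (X u⁻¹).left 0 = ((X u).left 0)⁻¹ := by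
      rw [_root_.map_inv, SemidirectProduct.inv_left, hru]
      simp
    rw [hl]
    exact ⟨inv_mem ihu.1, by rw [_root_.map_inv, ihu.2]⟩

-- evaluation lemmas for phi-images of generators of HA
lemma SV1 : (X (phi (c^2))).right = 1 ∧ (X (phi (c^2))).left 0 = c^2 := by
  have h : phi (c^2) = a^4 := by rw [map_pow, phi_c, ← pow_mul]
  rw [h, map_pow, X_a]
  exact ⟨Xa4R, Xa4L 0⟩

lemma SV2 : (X (phi y)).right = 1 ∧ (X (phi y)).left 0 = y := by
  rw [phi_y]
  refine ⟨?_, ?_⟩ <;>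
    simp (config := { decide := true }) only [_root_.map_mul, _root_.map_inv,
      SemidirectProduct.mul_left, SemidirectProduct.mul_right, SemidirectProduct.inv_left,
      SemidirectProduct.inv_right, shift_apply, Pi.mul_apply, Pi.inv_apply,
      X_a, X_b, MulAut.mul_apply, toAdd_ofAdd, toAdd_mul, toAdd_inv, toAdd_one,
      shift_inv_apply, XaL, XaR, XbL, XbR] <;>
    simp (config := { decide := true }) <;> try group

lemma SV3 : (X (phi t)).right = 1 ∧ (X (phi t)).left 0 = t := by
  rw [phi_t, X_b]
  refine ⟨XbR, ?_⟩
  rw [XbL]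
  simp (config := { decide := true })

lemma SV4 : (X (phi (c*t*c⁻¹))).right = 1 ∧ (X (phi (c*t*c⁻¹))).left 0 = c*t*c⁻¹ := by
  have h : phi (c*t*c⁻¹) = a^2*b*(a^2)⁻¹ := by
    simp only [_root_.map_mul, _root_.map_inv, phi_c, phi_t]
  rw [h]
  exact ⟨XV4.2, XV4.1⟩

lemma SV5 : (X (phi (c*y*c⁻¹))).right = 1 ∧ (X (phi (c*y*c⁻¹))).left 0 = c*y*c⁻¹ := by
  have h : phi (c*y*c⁻¹) = a^2*(b*a*b⁻¹*a⁻¹)*(a^2)⁻¹ := by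
    simp only [_root_.map_mul, _root_.map_inv, phi_c, phi_y]
  rw [h]
  refine ⟨?_, ?_⟩ <;>
    simp (config := { decide := true }) only [_root_.map_mul, _root_.map_inv, map_pow,
      SemidirectProduct.mul_left, SemidirectProduct.mul_right, SemidirectProduct.inv_left,
      SemidirectProduct.inv_right, shift_apply, Pi.mul_apply, Pi.inv_apply,
      X_a, X_b, MulAut.mul_apply, toAdd_ofAdd, toAdd_mul, toAdd_inv, toAdd_one,
      shift_inv_apply, XaL, XaR, Xa2L, Xa2R, XbL, XbR] <;>
    simp (config := { decide := true }) <;> try group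

-- S lemma
lemma Slem : ∀ g ∈ HA, (X (phi g)).right = 1 ∧ (X (phi g)).left 0 = g := by
  intro g hg
  induction hg using Subgroup.closure_induction with
  | mem x hx =>
    rcases hx with rfl | rfl | rfl | rfl | rfl
    exacts [SV1, SV2, SV5, SV3, SV4]
  | one => exact ⟨by simp, by simp⟩
  | mul u v hu hv ihu ihv =>
    have hr : (X (phi (u*v))).right = 1 := by
      rw [_root_.map_mul, _root_.map_mul, SemidirectProduct.mul_right, ihu.1, ihv.1, one_mul]
    have hl : (X (phi (u*v))).left 0 = (X (phi u)).left 0 * (X (phi v)).left 0 := by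
      rw [_root_.map_mul, _root_.map_mul, SemidirectProduct.mul_left, ihu.1]
      simp
    exact ⟨hr, by rw [hl, ihu.2, ihv.2]⟩
  | inv u hu ihu =>
    have hr : (X (phi u⁻¹)).right = 1 := by
      rw [_root_.map_inv, _root_.map_inv, SemidirectProduct.inv_right, ihu.1, inv_one]
    have hl : (X (phi u⁻¹)).left 0 = ((X (phi u)).left 0)⁻¹ := by
      rw [_root_.map_inv, _root_.map_inv, SemidirectProduct.inv_left, ihu.1]
      simp
    exact ⟨hr, by rw [hl, ihu.2]⟩

end Stmt8

open Stmt8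

/-- `G = ⟨c∘, y, t ∣ [y, c∘²] = 1, t⁻¹c∘²t = c∘⁸⟩` is commensurable with `BS(4,16)`:
it has a subgroup of index 2 isomorphic to a subgroup of index 4 of `BS(4,16)`. -/
theorem stmt8 : ∃ (A : Subgroup Gcyt) (B : Subgroup (BS 4 16)),
    A.index = 2 ∧ B.index = 4 ∧ Nonempty (A ≃* B) := by
  refine ⟨e2.ker, e4.ker, idxA, idxB, ⟨?_⟩⟩
  exact
    { toFun := fun g => ⟨phi g.1, MonoidHom.mem_ker.mpr ((Slem g.1 (HA_eq ▸ g.2)).1)⟩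
      invFun := fun w => ⟨(X w.1).left 0, HA_le_ker (Rlem w.1 (HB_eq ▸ w.2)).1⟩
      left_inv := fun g => Subtype.ext ((Slem g.1 (HA_eq ▸ g.2)).2)
      right_inv := fun w => Subtype.ext ((Rlem w.1 (HB_eq ▸ w.2)).2)
      map_mul' := fun g h => Subtype.ext (_root_.map_mul phi g.1 h.1) }
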